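/- arXiv:1107.5662 — 8 statements merged into one kernel-verified Lean document; each statement's English description precedes it below -/
import Mathlib

section
/- For any γ > 0 and any real numbers s, t with t > s > 1/√(2γ), the integral ∫_s^t e^{γu²} du satisfies (e^{γt²}/(2γt))·(1 − e^{−γ(t²−s²)/2}) ≤ ∫_s^t e^{γu²} du ≤ (e^{γt²}/(2γt))·(2γs²/(2γs² − 1)). -/
/-!
Both bounds compare `e^{γu²}` on `[s, t]` with an exact derivative. Since `u ≤ t`, the integrand
dominates `(u / t) e^{γu²}`, whose primitive is `e^{γu²} / (2γt)`. Conversely,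
`e^{γu²} / (2γu)` has derivative `e^{γu²} (1 - 1 / (2γu²))`, and for `u ≥ s` the factor
`1 - 1 / (2γu²)` is at least `(2γs² - 1) / (2γs²)`, which is positive as soon as `s > 1/√(2γ)`.
-/

open Real

namespace ExpMulSq

theorem hasDerivAt_exp_mul_sq (γ u : ℝ) :
    HasDerivAt (fun u : ℝ => exp (γ * u ^ 2)) (exp (γ * u ^ 2) * (2 * γ * u)) u := by
  have h := ((hasDerivAt_pow 2 u).const_mul γ).exp
  convert h using 2
  ring

theorem integral_mul_exp_mul_sq {γ : ℝ} (hγ : γ ≠ 0) (a b : ℝ) :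
    ∫ u in a..b, u * exp (γ * u ^ 2) = (exp (γ * b ^ 2) - exp (γ * a ^ 2)) / (2 * γ) := by
  have hderiv : ∀ u ∈ Set.uIcc a b,
      HasDerivAt (fun u : ℝ => exp (γ * u ^ 2) / (2 * γ)) (u * exp (γ * u ^ 2)) u := by
    intro u _
    refine ((hasDerivAt_exp_mul_sq γ u).div_const (2 * γ)).congr_deriv ?_
    field_simp
  rw [intervalIntegral.integral_eq_sub_of_hasDerivAt hderiv
    (Continuous.intervalIntegrable (by fun_prop) a b), sub_div]

theorem hasDerivAt_exp_mul_sq_div {γ u : ℝ} (hγ : γ ≠ 0) (hu : u ≠ 0) :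
    HasDerivAt (fun u : ℝ => exp (γ * u ^ 2) / (2 * γ * u))
      (exp (γ * u ^ 2) * (1 - 1 / (2 * γ * u ^ 2))) u := by
  have hlin : HasDerivAt (fun u : ℝ => 2 * γ * u) (2 * γ) u := by
    simpa using (hasDerivAt_id u).const_mul (2 * γ)
  refine ((hasDerivAt_exp_mul_sq γ u).div hlin (by simp [hγ, hu])).congr_deriv ?_
  field_simp

theorem continuousOn_exp_mul_sq_mul_one_sub {γ : ℝ} {S : Set ℝ} (hγ : γ ≠ 0) (h0 : (0 : ℝ) ∉ S) :
    ContinuousOn (fun u => exp (γ * u ^ 2) * (1 - 1 / (2 * γ * u ^ 2))) S :=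
  ContinuousOn.mul (by fun_prop) (continuousOn_const.sub (continuousOn_const.div (by fun_prop)
    fun u hu => by have : u ≠ 0 := fun h => h0 (h ▸ hu); positivity))

theorem integral_exp_mul_sq_mul_one_sub {γ a b : ℝ} (hγ : γ ≠ 0) (h0 : (0 : ℝ) ∉ Set.uIcc a b) :
    ∫ u in a..b, exp (γ * u ^ 2) * (1 - 1 / (2 * γ * u ^ 2))
      = exp (γ * b ^ 2) / (2 * γ * b) - exp (γ * a ^ 2) / (2 * γ * a) := by
  have hne : ∀ u ∈ Set.uIcc a b, u ≠ 0 := fun u hu hu0 => h0 (hu0 ▸ hu)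
  exact intervalIntegral.integral_eq_sub_of_hasDerivAt
    (fun u hu => hasDerivAt_exp_mul_sq_div hγ (hne u hu))
    (continuousOn_exp_mul_sq_mul_one_sub hγ h0).intervalIntegrable

theorem sub_div_le_integral_exp_mul_sq {γ s t : ℝ} (hγ : γ ≠ 0) (ht : 0 < t) (hst : s ≤ t) :
    (exp (γ * t ^ 2) - exp (γ * s ^ 2)) / (2 * γ * t) ≤ ∫ u in s..t, exp (γ * u ^ 2) := by
  calc (exp (γ * t ^ 2) - exp (γ * s ^ 2)) / (2 * γ * t)
      = ∫ u in s..t, u * exp (γ * u ^ 2) / t := by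
        rw [intervalIntegral.integral_div, integral_mul_exp_mul_sq hγ, div_div]
    _ ≤ ∫ u in s..t, exp (γ * u ^ 2) := by
        refine intervalIntegral.integral_mono_on hst
          (Continuous.intervalIntegrable (by fun_prop) _ _)
          (Continuous.intervalIntegrable (by fun_prop) _ _) fun u hu => ?_
        rw [div_le_iff₀ ht, mul_comm]
        exact mul_le_mul_of_nonneg_left hu.2 (exp_pos _).le

theorem one_le_div_sub_one_mul_one_sub_one_div {a b : ℝ} (ha : 1 < a) (hab : a ≤ b) :
    1 ≤ a / (a - 1) * (1 - 1 / b) := by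
  have hb : 0 < b := by linarith
  rw [div_mul_eq_mul_div, le_div_iff₀ (by linarith), one_sub_div hb.ne', mul_div_assoc',
    le_div_iff₀ hb]
  nlinarith

theorem integral_exp_mul_sq_le {γ s t : ℝ} (hγ : 0 < γ) (hs : 0 < s) (hγs : 1 < 2 * γ * s ^ 2)
    (hst : s ≤ t) :
    ∫ u in s..t, exp (γ * u ^ 2)
      ≤ 2 * γ * s ^ 2 / (2 * γ * s ^ 2 - 1)
        * (exp (γ * t ^ 2) / (2 * γ * t) - exp (γ * s ^ 2) / (2 * γ * s)) := by
  have h0 : (0 : ℝ) ∉ Set.uIcc s t := by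
    rw [Set.uIcc_of_le hst]
    exact fun h => hs.not_ge h.1
  rw [← integral_exp_mul_sq_mul_one_sub hγ.ne' h0, ← intervalIntegral.integral_const_mul]
  refine intervalIntegral.integral_mono_on hst
    (Continuous.intervalIntegrable (by fun_prop) _ _)
    ((continuousOn_const.mul (continuousOn_exp_mul_sq_mul_one_sub hγ.ne' h0)).intervalIntegrable)
    fun u hu => ?_
  have hsu : 2 * γ * s ^ 2 ≤ 2 * γ * u ^ 2 := by gcongr; exact hu.1
  calc exp (γ * u ^ 2) = exp (γ * u ^ 2) * 1 := (mul_one _).symm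
    _ ≤ exp (γ * u ^ 2) * (2 * γ * s ^ 2 / (2 * γ * s ^ 2 - 1) * (1 - 1 / (2 * γ * u ^ 2))) :=
        mul_le_mul_of_nonneg_left (one_le_div_sub_one_mul_one_sub_one_div hγs hsu) (exp_pos _).le
    _ = _ := by ring

end ExpMulSq

open ExpMulSq in
/-- Lemma (exp-integral bounds, growing case): for `γ > 0` and `t > s > 1/√(2γ)`,
`(e^{γt²}/(2γt))·(1 − e^{−γ(t²−s²)/2}) ≤ ∫_s^t e^{γu²} du ≤ (e^{γt²}/(2γt))·(2γs²/(2γs²−1))`. -/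
theorem stmt_0 (γ s t : ℝ) (hγ : 0 < γ) (hs : 1 / Real.sqrt (2 * γ) < s) (hst : s < t) :
    Real.exp (γ * t ^ 2) / (2 * γ * t) * (1 - Real.exp (-γ * (t ^ 2 - s ^ 2) / 2))
      ≤ (∫ u in s..t, Real.exp (γ * u ^ 2)) ∧
    (∫ u in s..t, Real.exp (γ * u ^ 2))
      ≤ Real.exp (γ * t ^ 2) / (2 * γ * t) * (2 * γ * s ^ 2 / (2 * γ * s ^ 2 - 1)) := by
  have hs0 : 0 < s := lt_trans (by positivity) hs
  have ht0 : 0 < t := hs0.trans hst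
  have hγs : 1 < 2 * γ * s ^ 2 := by
    have h1 : 1 < s * sqrt (2 * γ) := (div_lt_iff₀ (by positivity)).1 hs
    nlinarith [sq_sqrt (by positivity : (0 : ℝ) ≤ 2 * γ)]
  constructor
  · have hdecay : exp (γ * s ^ 2) ≤ exp (γ * t ^ 2) * exp (-γ * (t ^ 2 - s ^ 2) / 2) := by
      rw [← exp_add]
      have hsq : s ^ 2 ≤ t ^ 2 := pow_le_pow_left₀ hs0.le hst.le 2
      exact exp_le_exp.2 (by nlinarith [mul_le_mul_of_nonneg_left hsq hγ.le])
    calc exp (γ * t ^ 2) / (2 * γ * t) * (1 - exp (-γ * (t ^ 2 - s ^ 2) / 2))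
        ≤ (exp (γ * t ^ 2) - exp (γ * s ^ 2)) / (2 * γ * t) := by
          rw [mul_one_sub, sub_div, div_mul_eq_mul_div]
          gcongr
      _ ≤ ∫ u in s..t, exp (γ * u ^ 2) := sub_div_le_integral_exp_mul_sq hγ.ne' ht0 hst.le
  · have hc : 0 ≤ 2 * γ * s ^ 2 / (2 * γ * s ^ 2 - 1) := div_nonneg (by positivity) (by linarith)
    calc ∫ u in s..t, exp (γ * u ^ 2)
        ≤ 2 * γ * s ^ 2 / (2 * γ * s ^ 2 - 1)
          * (exp (γ * t ^ 2) / (2 * γ * t) - exp (γ * s ^ 2) / (2 * γ * s)) :=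
          integral_exp_mul_sq_le hγ hs0 hγs hst.le
      _ ≤ 2 * γ * s ^ 2 / (2 * γ * s ^ 2 - 1) * (exp (γ * t ^ 2) / (2 * γ * t)) :=
          mul_le_mul_of_nonneg_left (sub_le_self _ (by positivity)) hc
      _ = _ := mul_comm _ _
end

section
/- For β > 1, there exists h_c > 0 such that for every h with |h| < h_c the equation m = tanh(β(m + h)) has exactly three solutions in (−1, 1), while for |h| > h_c it has exactly one solution. -/
/-!
Substituting `u = β (m + h)`, the solutions `m ∈ (-1, 1)` of `m = tanh (β (m + h))` are exactly
the values `m = tanh u` at the roots of `u / β - tanh u = h`, and `tanh` is injective. The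
function `u ↦ u / β - tanh u` is odd, tends to `±∞` at `±∞`, and has derivative
`tanh² u - (1 - 1/β)`; for `β > 1` it therefore increases, decreases and increases again, with
turning points `±u₀` where `tanh² u₀ = 1 - 1/β`. A level `h` strictly between the local minimum
`-h_c` and the local maximum `h_c` is taken three times, a level outside `[-h_c, h_c]` once.
-/

open Real Set Filter

namespace Real

theorem hasDerivAt_tanh (x : ℝ) : HasDerivAt tanh (1 - tanh x ^ 2) x := by
  have hcosh : cosh x ≠ 0 := (cosh_pos x).ne'
  have hquot : tanh = sinh / cosh := funext tanh_eq_sinh_div_cosh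
  refine hquot ▸ ((hasDerivAt_sinh x).div (hasDerivAt_cosh x) hcosh).congr_deriv ?_
  rw [Pi.div_apply]
  field_simp

theorem strictMono_tanh : StrictMono tanh :=
  strictMono_of_hasDerivAt_pos hasDerivAt_tanh fun x => sub_pos.2 (tanh_sq_lt_one x)

theorem abs_tanh (x : ℝ) : |tanh x| = tanh |x| := by
  rcases le_total 0 x with hx | hx
  · rw [abs_of_nonneg hx, abs_of_nonneg (tanh_zero ▸ strictMono_tanh.monotone hx)]
  · rw [abs_of_nonpos hx, abs_of_nonpos (tanh_zero ▸ strictMono_tanh.monotone hx), tanh_neg]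

theorem tanh_sq_lt_tanh_sq {x y : ℝ} : tanh x ^ 2 < tanh y ^ 2 ↔ |x| < |y| := by
  rw [sq_lt_sq, abs_tanh, abs_tanh, strictMono_tanh.lt_iff_lt]

theorem exists_pos_tanh_sq_eq {c : ℝ} (hc : c ∈ Ioo 0 1) : ∃ u > 0, tanh u ^ 2 = c := by
  have hsqrt : √c ∈ Ioo 0 1 := ⟨sqrt_pos.2 hc.1, sqrt_one ▸ sqrt_lt_sqrt hc.1.le hc.2⟩
  refine ⟨artanh √c, artanh_pos hsqrt, ?_⟩
  rw [tanh_artanh ⟨by linarith [hsqrt.1], hsqrt.2⟩, sq_sqrt hc.1.le]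

end Real

structure IsNShaped (g : ℝ → ℝ) (a b : ℝ) : Prop where
  lt : a < b
  continuous : Continuous g
  tendsto_atBot : Tendsto g atBot atBot
  tendsto_atTop : Tendsto g atTop atTop
  strictMonoOn_Iic : StrictMonoOn g (Iic a)
  strictAntiOn_Icc : StrictAntiOn g (Icc a b)
  strictMonoOn_Ici : StrictMonoOn g (Ici b)

namespace IsNShaped

variable {g : ℝ → ℝ} {a b x y : ℝ}

theorem apply_right_lt_apply_left (hg : IsNShaped g a b) : g b < g a :=
  hg.strictAntiOn_Icc (left_mem_Icc.2 hg.lt.le) (right_mem_Icc.2 hg.lt.le) hg.lt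

theorem apply_le_apply_left (hg : IsNShaped g a b) (hx : x ≤ b) : g x ≤ g a := by
  rcases le_or_gt x a with hxa | hax
  · exact hg.strictMonoOn_Iic.monotoneOn hxa self_mem_Iic hxa
  · exact hg.strictAntiOn_Icc.antitoneOn (left_mem_Icc.2 hg.lt.le) ⟨hax.le, hx⟩ hax.le

theorem apply_right_le_apply (hg : IsNShaped g a b) (hx : a ≤ x) : g b ≤ g x := by
  rcases le_or_gt b x with hbx | hxb
  · exact hg.strictMonoOn_Ici.monotoneOn self_mem_Ici hbx hbx
  · exact hg.strictAntiOn_Icc.antitoneOn ⟨hx, hxb.le⟩ (right_mem_Icc.2 hg.lt.le) hxb.le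

theorem exists_lt_apply_eq (hg : IsNShaped g a b) (hy : y < g a) : ∃ x < a, g x = y := by
  obtain ⟨x, hxa, hxy⟩ := isPreconnected_Iic.intermediate_value_Iic self_mem_Iic
    (le_principal_iff.2 (Iic_mem_atBot a)) hg.continuous.continuousOn hg.tendsto_atBot hy.le
  refine ⟨x, lt_of_le_of_ne hxa ?_, hxy⟩
  rintro rfl
  exact hy.ne hxy.symm

theorem exists_gt_apply_eq (hg : IsNShaped g a b) (hy : g b < y) : ∃ x > b, g x = y := by
  obtain ⟨x, hbx, hxy⟩ := isPreconnected_Ici.intermediate_value_Ici self_mem_Ici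
    (le_principal_iff.2 (Ici_mem_atTop b)) hg.continuous.continuousOn hg.tendsto_atTop hy.le
  refine ⟨x, lt_of_le_of_ne hbx ?_, hxy⟩
  rintro rfl
  exact hy.ne hxy

theorem ncard_preimage_singleton_eq_three (hg : IsNShaped g a b) (hy : y ∈ Ioo (g b) (g a)) :
    (g ⁻¹' {y}).ncard = 3 := by
  obtain ⟨x₁, hx₁a, hx₁⟩ := hg.exists_lt_apply_eq hy.2
  obtain ⟨x₂, hx₂, hx₂y⟩ := intermediate_value_Ioo' hg.lt.le hg.continuous.continuousOn hy
  obtain ⟨x₃, hbx₃, hx₃⟩ := hg.exists_gt_apply_eq hy.1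
  refine ncard_eq_three.2 ⟨x₁, x₂, x₃, (hx₁a.trans hx₂.1).ne, (hx₁a.trans hg.lt |>.trans hbx₃).ne,
    (hx₂.2.trans hbx₃).ne, ?_⟩
  ext x
  simp only [mem_preimage, mem_singleton_iff, mem_insert_iff]
  refine ⟨fun hx => ?_, by rintro (rfl | rfl | rfl) <;> assumption⟩
  rcases le_or_gt x a with hxa | hax
  · exact Or.inl (hg.strictMonoOn_Iic.injOn hxa hx₁a.le (hx.trans hx₁.symm))
  rcases le_or_gt x b with hxb | hbx
  · exact Or.inr <| Or.inl <| hg.strictAntiOn_Icc.injOn ⟨hax.le, hxb⟩ (Ioo_subset_Icc_self hx₂)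
      (hx.trans hx₂y.symm)
  · exact Or.inr <| Or.inr <| hg.strictMonoOn_Ici.injOn hbx.le hbx₃.le (hx.trans hx₃.symm)

theorem ncard_preimage_singleton_eq_one_of_apply_left_lt (hg : IsNShaped g a b) (hy : g a < y) :
    (g ⁻¹' {y}).ncard = 1 := by
  obtain ⟨x₃, hbx₃, hx₃⟩ := hg.exists_gt_apply_eq (hg.apply_right_lt_apply_left.trans hy)
  refine ncard_eq_one.2 ⟨x₃, ?_⟩
  ext x
  simp only [mem_preimage, mem_singleton_iff]
  refine ⟨fun hx => ?_, fun hx => hx ▸ hx₃⟩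
  rcases le_or_gt b x with hbx | hxb
  · exact hg.strictMonoOn_Ici.injOn hbx hbx₃.le (hx.trans hx₃.symm)
  · exact absurd (hg.apply_le_apply_left hxb.le) (hx ▸ hy).not_ge

theorem ncard_preimage_singleton_eq_one_of_lt_apply_right (hg : IsNShaped g a b) (hy : y < g b) :
    (g ⁻¹' {y}).ncard = 1 := by
  obtain ⟨x₁, hx₁a, hx₁⟩ := hg.exists_lt_apply_eq (hy.trans hg.apply_right_lt_apply_left)
  refine ncard_eq_one.2 ⟨x₁, ?_⟩
  ext x
  simp only [mem_preimage, mem_singleton_iff]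
  refine ⟨fun hx => ?_, fun hx => hx ▸ hx₁⟩
  rcases le_or_gt x a with hxa | hax
  · exact hg.strictMonoOn_Iic.injOn hxa hx₁a.le (hx.trans hx₁.symm)
  · exact absurd (hg.apply_right_le_apply hax.le) (hx ▸ hy).not_ge

end IsNShaped

theorem isNShaped_div_sub_tanh {β u₀ : ℝ} (hβ : 0 < β) (hu₀ : 0 < u₀)
    (hcrit : tanh u₀ ^ 2 = 1 - 1 / β) : IsNShaped (fun u => u / β - tanh u) (-u₀) u₀ := by
  have hderiv (u : ℝ) : HasDerivAt (fun u => u / β - tanh u) (tanh u ^ 2 - tanh u₀ ^ 2) u := by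
    refine (((hasDerivAt_id' u).div_const β).sub (hasDerivAt_tanh u)).congr_deriv ?_
    rw [hcrit]
    ring
  have hcont : Continuous fun u => u / β - tanh u :=
    continuous_iff_continuousAt.2 fun u => (hderiv u).continuousAt
  refine ⟨by linarith, hcont, ?_, ?_, ?_, ?_, ?_⟩
  · simpa only [sub_eq_add_neg, id] using tendsto_atBot_add_right_of_ge _ 1
      (tendsto_id.atBot_div_const hβ) fun u => neg_le.1 (neg_one_lt_tanh u).le
  · simpa only [sub_eq_add_neg, id] using tendsto_atTop_add_right_of_le _ (-1)
      (tendsto_id.atTop_div_const hβ) fun u => neg_le_neg (tanh_lt_one u).le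
  · refine strictMonoOn_of_hasDerivWithinAt_pos (convex_Iic _) hcont.continuousOn
      (fun u _ => (hderiv u).hasDerivWithinAt) fun u hu => sub_pos.2 (tanh_sq_lt_tanh_sq.2 ?_)
    rw [interior_Iic, mem_Iio] at hu
    rw [abs_of_pos hu₀, lt_abs]
    exact Or.inr (by linarith)
  · refine strictAntiOn_of_hasDerivWithinAt_neg (convex_Icc _ _) hcont.continuousOn
      (fun u _ => (hderiv u).hasDerivWithinAt) fun u hu => sub_neg.2 (tanh_sq_lt_tanh_sq.2 ?_)
    rw [interior_Icc, mem_Ioo] at hu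
    rw [abs_of_pos hu₀, abs_lt]
    exact hu
  · refine strictMonoOn_of_hasDerivWithinAt_pos (convex_Ici _) hcont.continuousOn
      (fun u _ => (hderiv u).hasDerivWithinAt) fun u hu => sub_pos.2 (tanh_sq_lt_tanh_sq.2 ?_)
    rw [interior_Ici, mem_Ioi] at hu
    rw [abs_of_pos hu₀, lt_abs]
    exact Or.inl hu

theorem meanField_solutions_eq_image {β : ℝ} (hβ : β ≠ 0) (h : ℝ) :
    {m : ℝ | m ∈ Ioo (-1 : ℝ) 1 ∧ m = tanh (β * (m + h))} =
      tanh '' ((fun u => u / β - tanh u) ⁻¹' {h}) := by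
  ext m
  constructor
  · rintro ⟨-, hm⟩
    refine ⟨β * (m + h), ?_, hm.symm⟩
    show β * (m + h) / β - tanh (β * (m + h)) = h
    rw [← hm, mul_div_cancel_left₀ _ hβ, add_sub_cancel_left]
  · rintro ⟨u, hu, rfl⟩
    simp only [mem_preimage, mem_singleton_iff] at hu
    refine ⟨⟨neg_one_lt_tanh u, tanh_lt_one u⟩, ?_⟩
    rw [← hu, add_sub_cancel, mul_div_cancel₀ _ hβ]

/-- For `β > 1` there is a coercive field `h_c > 0`: for `|h| < h_c` the mean-field equation
`m = tanh(β(m+h))` has exactly three solutions in `(-1,1)`, for `|h| > h_c` exactly one. -/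
theorem stmt_3 (β : ℝ) (hβ : 1 < β) :
    ∃ h_c > 0, ∀ h : ℝ,
      (|h| < h_c →
        Set.ncard {m : ℝ | m ∈ Set.Ioo (-1 : ℝ) 1 ∧ m = Real.tanh (β * (m + h))} = 3) ∧
      (h_c < |h| →
        Set.ncard {m : ℝ | m ∈ Set.Ioo (-1 : ℝ) 1 ∧ m = Real.tanh (β * (m + h))} = 1) := by
  have hβ₀ : 0 < β := by linarith
  obtain ⟨u₀, hu₀, hcrit⟩ := exists_pos_tanh_sq_eq (c := 1 - 1 / β)
    ⟨by rw [sub_pos, div_lt_one hβ₀]; exact hβ, by linarith [one_div_pos.2 hβ₀]⟩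
  set g : ℝ → ℝ := fun u => u / β - tanh u
  have hg : IsNShaped g (-u₀) u₀ := isNShaped_div_sub_tanh hβ₀ hu₀ hcrit
  have hodd : g u₀ = -g (-u₀) := by simp only [g, tanh_neg]; ring
  refine ⟨g (-u₀), by linarith [hg.apply_right_lt_apply_left],
    fun h => ⟨fun hh => ?_, fun hh => ?_⟩⟩
  all_goals rw [meanField_solutions_eq_image hβ₀.ne', ncard_image_of_injective _ tanh_injective]
  · exact hg.ncard_preimage_singleton_eq_three
      ⟨by linarith [neg_abs_le h], by linarith [le_abs_self h]⟩
  · rcases lt_abs.1 hh with hlt | hlt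
    · exact hg.ncard_preimage_singleton_eq_one_of_apply_left_lt hlt
    · exact hg.ncard_preimage_singleton_eq_one_of_lt_apply_right (by linarith)
end

section
/- For F(m,h) = −m + tanh(β(m+h)) with β > 1, the Taylor expansion of F around the critical point (m_c, −h_c) has vanishing zeroth and first order terms in (m − m_c), with leading behavior F(m,h) = (h + h_c) − β m_c (m − m_c)² + O((h+h_c)(m−m_c)) + O((h+h_c)²) + O((m−m_c)³). -/
/-!
Put `t₀ = β (m_c - h_c)` and `s = β ((m - m_c) + (h + h_c))`, so that `β (m + h) = t₀ + s`.
Expanding `tanh` to second order at `t₀`, where `tanh t₀ = m_c` and `tanh' t₀ = 1 - m_c² = 1/β`,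
the linear term `(1 - m_c²) s = (m - m_c) + (h + h_c)` cancels `-m + m_c` up to `h + h_c`, and the
quadratic term is `-β m_c ((m - m_c) + (h + h_c))²`; what remains are cross terms and the cubic
remainder of `tanh`, which is `O(|s|³)` because the third derivative of `tanh` is bounded.
-/

open Real

theorem Real.hasDerivAt_tanh_s5 (x : ℝ) : HasDerivAt tanh (1 - tanh x ^ 2) x := by
  rw [show tanh = sinh / cosh from funext tanh_eq_sinh_div_cosh]
  refine ((hasDerivAt_sinh x).div (hasDerivAt_cosh x) (cosh_pos x).ne').congr_deriv ?_
  simp only [Pi.div_apply]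
  field_simp

theorem norm_le_mul_pow_succ_of_hasDerivAt {E : Type*} [NormedAddCommGroup E] [NormedSpace ℝ E]
    {g g' : ℝ → E} {K : ℝ} {n : ℕ} (hg : ∀ t, HasDerivAt g (g' t) t) (hg0 : g 0 = 0)
    (hg' : ∀ t, ‖g' t‖ ≤ K * |t| ^ n) (s : ℝ) : ‖g s‖ ≤ K * |s| ^ (n + 1) := by
  have hK : 0 ≤ K := by simpa using (norm_nonneg _).trans (hg' 1)
  have hbound : ∀ t ∈ Set.uIcc 0 s, ‖g' t‖ ≤ K * |s| ^ n := fun t ht => by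
    have hts : |t| ≤ |s| := by simpa using Set.abs_sub_left_of_mem_uIcc ht
    exact (hg' t).trans (by gcongr)
  have := (convex_uIcc 0 s).norm_image_sub_le_of_norm_hasDerivWithin_le
    (fun t _ => (hg t).hasDerivWithinAt) hbound Set.left_mem_uIcc Set.right_mem_uIcc
  simpa [hg0, pow_succ, mul_assoc] using this

theorem Real.abs_tanh_add_sub_taylor_le (t s : ℝ) :
    |tanh (t + s) - tanh t - (1 - tanh t ^ 2) * s + tanh t * (1 - tanh t ^ 2) * s ^ 2|
      ≤ 2 * |s| ^ 3 := by
  set a := tanh t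
  have hT : ∀ u, HasDerivAt (fun u => tanh (t + u)) (1 - tanh (t + u) ^ 2) u :=
    fun u => (hasDerivAt_tanh_s5 (t + u)).comp_const_add t u
  -- `hremₖ` bounds the `k`-th Taylor remainder of `u ↦ tanh (t + u)`, whose derivative is the
  -- `(k+1)`-st one; `hderiv3` bounds the third derivative `(1 - tanh²) (6 tanh² - 2)`
  have hderiv3 : ∀ u, ‖(1 - tanh (t + u) ^ 2) * (6 * tanh (t + u) ^ 2 - 2)‖ ≤ 2 * |u| ^ 0 := by
    intro u
    have hnonneg := sq_nonneg (tanh (t + u))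
    have hle := (tanh_sq_lt_one (t + u)).le
    rw [Real.norm_eq_abs, pow_zero, mul_one, abs_le]
    constructor <;> nlinarith
  have hrem2 : ∀ u, ‖-2 * tanh (t + u) * (1 - tanh (t + u) ^ 2) + 2 * a * (1 - a ^ 2)‖
      ≤ 2 * |u| ^ 1 := by
    refine norm_le_mul_pow_succ_of_hasDerivAt (fun u => ?_) (by simp [a]) hderiv3
    refine ((((hT u).const_mul (-2)).mul (((hT u).pow 2).const_sub 1)).add_const
      (2 * a * (1 - a ^ 2))).congr_deriv ?_
    simp only [Pi.pow_apply]
    ring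
  have hrem1 : ∀ u, ‖(1 - tanh (t + u) ^ 2) - (1 - a ^ 2) + 2 * a * (1 - a ^ 2) * u‖
      ≤ 2 * |u| ^ 2 := by
    refine norm_le_mul_pow_succ_of_hasDerivAt (fun u => ?_) (by simp [a]) hrem2
    refine ((((hT u).pow 2).const_sub 1).sub_const (1 - a ^ 2) |>.add
      ((hasDerivAt_id u).const_mul (2 * a * (1 - a ^ 2)))).congr_deriv ?_
    ring
  have hrem0 : ∀ u, ‖tanh (t + u) - a - (1 - a ^ 2) * u + a * (1 - a ^ 2) * u ^ 2‖
      ≤ 2 * |u| ^ 3 := by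
    refine norm_le_mul_pow_succ_of_hasDerivAt (fun u => ?_) (by simp [a]) hrem1
    refine ((((hT u).sub_const a).sub ((hasDerivAt_id u).const_mul (1 - a ^ 2))).add
      (((hasDerivAt_id u).pow 2).const_mul (a * (1 - a ^ 2)))).congr_deriv ?_
    simp only [id]
    ring
  simpa only [Real.norm_eq_abs] using hrem0 s

theorem add_pow_three_le_of_le_one {A B : ℝ} (hA : 0 ≤ A) (hA1 : A ≤ 1) (hB : 0 ≤ B)
    (hB1 : B ≤ 1) : (A + B) ^ 3 ≤ 4 * (B * A + B ^ 2 + A ^ 3) := by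
  nlinarith [mul_nonneg (mul_nonneg hA hB) (sub_nonneg.2 hA1),
    mul_nonneg (mul_nonneg hB hB) (sub_nonneg.2 hA1),
    mul_nonneg (mul_nonneg hB hB) (sub_nonneg.2 hB1), pow_nonneg hA 3]

theorem abs_sub_cross_terms_le {β a x e R : ℝ} (hx : |x| ≤ 1) (he : |e| ≤ 1)
    (hR : |R| ≤ 2 * |β * (x + e)| ^ 3) :
    |R - β * a * (2 * x * e + e ^ 2)|
      ≤ (8 * |β| ^ 3 + 2 * |β| * |a|) * (|e| * |x| + e ^ 2 + |x| ^ 3) := by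
  have hcube : |β * (x + e)| ^ 3 ≤ |β| ^ 3 * (4 * (|e| * |x| + e ^ 2 + |x| ^ 3)) := by
    rw [abs_mul, mul_pow, ← sq_abs e]
    gcongr
    exact (pow_le_pow_left₀ (abs_nonneg _) (abs_add_le _ _) 3).trans
      (add_pow_three_le_of_le_one (abs_nonneg x) hx (abs_nonneg e) he)
  have hcross : |β * a * (2 * x * e + e ^ 2)|
      ≤ |β| * |a| * (2 * (|e| * |x| + e ^ 2 + |x| ^ 3)) := by
    rw [abs_mul, abs_mul]
    gcongr
    calc _ ≤ |2 * x * e| + |e ^ 2| := abs_add_le _ _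
      _ = 2 * (|e| * |x|) + e ^ 2 := by rw [abs_mul, abs_mul, abs_two, abs_sq]; ring
      _ ≤ _ := by nlinarith [pow_nonneg (abs_nonneg x) 3]
  calc _ ≤ |R| + |β * a * (2 * x * e + e ^ 2)| := abs_sub _ _
    _ ≤ _ := add_le_add (hR.trans (mul_le_mul_of_nonneg_left hcube zero_le_two)) hcross
    _ = _ := by ring

theorem stmt_5_general (β h_c m_c : ℝ)
    (hmc : m_c = Real.tanh (β * (m_c - h_c)))
    (hdeg : β * (1 - m_c ^ 2) = 1) :
    ∃ C > 0, ∃ δ > 0, ∀ m h : ℝ, |m - m_c| < δ → |h + h_c| < δ →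
      |(-m + Real.tanh (β * (m + h))) - ((h + h_c) - β * m_c * (m - m_c) ^ 2)|
        ≤ C * (|h + h_c| * |m - m_c| + (h + h_c) ^ 2 + |m - m_c| ^ 3) := by
  have hβ : β ≠ 0 := left_ne_zero_of_mul_eq_one hdeg
  refine ⟨8 * |β| ^ 3 + 2 * |β| * |m_c|, by positivity, 1, one_pos, fun m h hm hh => ?_⟩
  have htaylor := abs_tanh_add_sub_taylor_le (β * (m_c - h_c)) (β * ((m - m_c) + (h + h_c)))
  rw [← hmc] at htaylor
  have hexpand : -m + tanh (β * (m + h)) - ((h + h_c) - β * m_c * (m - m_c) ^ 2)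
      = (tanh (β * (m_c - h_c) + β * ((m - m_c) + (h + h_c))) - m_c
          - (1 - m_c ^ 2) * (β * ((m - m_c) + (h + h_c)))
          + m_c * (1 - m_c ^ 2) * (β * ((m - m_c) + (h + h_c))) ^ 2)
        - β * m_c * (2 * (m - m_c) * (h + h_c) + (h + h_c) ^ 2) := by
    rw [show β * (m_c - h_c) + β * ((m - m_c) + (h + h_c)) = β * (m + h) by ring]
    linear_combination (m - m_c + (h + h_c) - m_c * β * (m - m_c + (h + h_c)) ^ 2) * hdeg
  rw [hexpand]
  exact abs_sub_cross_terms_le hm.le hh.le htaylor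

/-- Taylor expansion of the drift `F(m,h) = −m + tanh(β(m+h))` around the critical point
`(m_c, −h_c)`: `F(m,h) = (h+h_c) − β m_c (m−m_c)² + O((h+h_c)(m−m_c)) + O((h+h_c)²) + O((m−m_c)³)`. -/
theorem stmt_5 (β h_c m_c : ℝ) (hβ : 1 < β) (hhc : 0 < h_c)
    (hmc : m_c = Real.tanh (β * (m_c - h_c)))
    (hdeg : β * (1 - m_c ^ 2) = 1) :
    ∃ C > 0, ∃ δ > 0, ∀ m h : ℝ, |m - m_c| < δ → |h + h_c| < δ →
      |(-m + Real.tanh (β * (m + h))) - ((h + h_c) - β * m_c * (m - m_c) ^ 2)|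
        ≤ C * (|h + h_c| * |m - m_c| + (h + h_c) ^ 2 + |m - m_c| ^ 3) :=
  stmt_5_general β h_c m_c hmc hdeg
end

section
/- There exists a decreasing solution y*(t) of the ODE y'(t) = t² − y²(t) such that −t > y*(t) > −√(t² + 1) for all t ≥ 0. -/
/-!
`y*` is the logarithmic derivative `u'/u` of the positive decaying solution
`u(t) = e^(-t²/2) ∫₀^∞ s^(-1/2) e^(-2ts-s²) ds` of `u'' = t² u`. With the moments
`M_α(t) = ∫₀^∞ s^α e^(-2ts-s²) ds`, which satisfy `M_α' = -2 M_(α+1)`, this reads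
`y* = -t - 2 M_(1/2) / M_(-1/2)`. Positivity of the moments gives `y* < -t`, hence
`y*' = t² - y*² < 0` for `t > 0`. Integration by parts gives
`2 M_(3/2) = M_(-1/2)/2 - 2t M_(1/2)`; combined with the strict Cauchy–Schwarz inequality
`M_(1/2)² < M_(-1/2) M_(3/2)` it yields `(t + 2 M_(1/2) / M_(-1/2))² < t² + 1`,
that is `y* > -√(t² + 1)`.
-/

open Set MeasureTheory Real Filter

namespace Riccati

noncomputable def weight (α t s : ℝ) : ℝ := s ^ α * exp (-(2 * t * s) - s ^ 2)

noncomputable def moment (α t : ℝ) : ℝ := ∫ s in Ioi 0, weight α t s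

variable {α t s : ℝ}

lemma weight_pos (hs : 0 < s) : 0 < weight α t s :=
  mul_pos (rpow_pos_of_pos hs α) (exp_pos _)

lemma measurable_weight : Measurable (weight α t) := by
  unfold weight; fun_prop

lemma continuous_weight (hα : 0 ≤ α) : Continuous (weight α t) :=
  (continuous_rpow_const hα).mul (by fun_prop)

lemma weight_zero (hα : 0 < α) : weight α t 0 = 0 := by
  simp [weight, zero_rpow hα.ne']

lemma norm_weight_le {b : ℝ} (hb : -t ≤ b) (hs : 0 < s) :
    ‖weight α t s‖ ≤ exp ((1 + 2 * b) ^ 2 / 4) * (exp (-s) * s ^ α) := by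
  have hexp : exp (-(2 * t * s) - s ^ 2) ≤ exp ((1 + 2 * b) ^ 2 / 4) * exp (-s) := by
    rw [← exp_add]
    gcongr
    nlinarith [sq_nonneg (s - (1 + 2 * b) / 2), mul_le_mul_of_nonneg_right hb hs.le]
  rw [norm_of_nonneg (weight_pos hs).le, weight]
  calc s ^ α * exp (-(2 * t * s) - s ^ 2)
      ≤ s ^ α * (exp ((1 + 2 * b) ^ 2 / 4) * exp (-s)) := by gcongr
    _ = exp ((1 + 2 * b) ^ 2 / 4) * (exp (-s) * s ^ α) := by ring

lemma integrableOn_exp_neg_mul_rpow (hα : -1 < α) :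
    IntegrableOn (fun s => exp (-s) * s ^ α) (Ioi 0) := by
  simpa using GammaIntegral_convergent (by linarith : 0 < α + 1)

lemma integrableOn_weight (hα : -1 < α) (t : ℝ) : IntegrableOn (weight α t) (Ioi 0) := by
  refine ((integrableOn_exp_neg_mul_rpow hα).const_mul (exp ((1 + 2 * |t|) ^ 2 / 4))).mono'
    measurable_weight.aestronglyMeasurable ?_
  filter_upwards [ae_restrict_mem measurableSet_Ioi] with s hs
  exact norm_weight_le (neg_le_abs t) hs

lemma setIntegral_Ioi_pos {f : ℝ → ℝ} {a b : ℝ} (hf : IntegrableOn f (Ioi a))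
    (hf_nonneg : ∀ s ∈ Ioi a, 0 ≤ f s) (hf_pos : ∀ s ∈ Ioi b, 0 < f s) :
    0 < ∫ s in Ioi a, f s := by
  rw [setIntegral_pos_iff_support_of_nonneg_ae
    ((ae_restrict_iff' measurableSet_Ioi).2 (Eventually.of_forall hf_nonneg)) hf]
  have hsub : Ioi (max a b) ⊆ Function.support f ∩ Ioi a := fun s hs =>
    ⟨(hf_pos s (lt_of_le_of_lt (le_max_right a b) hs)).ne',
      lt_of_le_of_lt (le_max_left a b) hs⟩
  exact lt_of_lt_of_le (by simp) (measure_mono hsub)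

lemma moment_pos (hα : -1 < α) (t : ℝ) : 0 < moment α t :=
  setIntegral_Ioi_pos (b := 0) (integrableOn_weight hα t) (fun _ hs => (weight_pos hs).le)
    (fun _ hs => weight_pos hs)

lemma hasDerivAt_weight_param (hs : 0 < s) :
    HasDerivAt (fun t => weight α t s) (-2 * weight (α + 1) t s) t := by
  have h : HasDerivAt (fun t : ℝ => -(2 * t * s) - s ^ 2) (-(2 * s)) t := by
    simpa using (((hasDerivAt_id t).const_mul 2).mul_const s).neg.sub_const (s ^ 2)
  refine (h.exp.const_mul (s ^ α)).congr_deriv ?_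
  rw [weight, rpow_add hs, rpow_one]
  ring

lemma hasDerivAt_moment (hα : -1 < α) (t₀ : ℝ) :
    HasDerivAt (moment α) (-2 * moment (α + 1) t₀) t₀ := by
  set c := exp ((1 + 2 * (|t₀| + 1)) ^ 2 / 4)
  have hbound : ∀ᵐ s ∂volume.restrict (Ioi 0), ∀ t ∈ Metric.ball t₀ 1,
      ‖-2 * weight (α + 1) t s‖ ≤ 2 * (c * (exp (-s) * s ^ (α + 1))) := by
    filter_upwards [ae_restrict_mem measurableSet_Ioi] with s hs t ht
    have ht' : -t ≤ |t₀| + 1 := by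
      rw [Metric.mem_ball, dist_eq] at ht
      linarith [(abs_lt.mp ht).1, neg_abs_le t₀]
    rw [norm_mul, norm_neg, norm_two]
    gcongr
    exact norm_weight_le ht' hs
  have hdiff : ∀ᵐ s ∂volume.restrict (Ioi 0), ∀ t ∈ Metric.ball t₀ 1,
      HasDerivAt (fun t => weight α t s) (-2 * weight (α + 1) t s) t := by
    filter_upwards [ae_restrict_mem measurableSet_Ioi] with s hs t _
    exact hasDerivAt_weight_param hs
  have h := hasDerivAt_integral_of_dominated_loc_of_deriv_le (F := fun t s => weight α t s)
    (Metric.ball_mem_nhds t₀ one_pos)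
    (Eventually.of_forall fun _ => measurable_weight.aestronglyMeasurable)
    (integrableOn_weight hα t₀) (measurable_weight.aestronglyMeasurable.const_mul (-2)) hbound
    (((integrableOn_exp_neg_mul_rpow (by linarith)).const_mul c).const_mul 2) hdiff
  rw [integral_const_mul] at h
  exact h.2

lemma hasDerivAt_weight (hs : 0 < s) :
    HasDerivAt (weight α t)
      (α * weight (α - 1) t s + -2 * t * weight α t s + -2 * weight (α + 1) t s) s := by
  have h : HasDerivAt (fun s : ℝ => -(2 * t * s) - s ^ 2) (-(2 * t) - 2 * s) s := by
    simpa using (((hasDerivAt_id s).const_mul (2 * t)).fun_neg.fun_sub (hasDerivAt_pow 2 s))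
  refine ((hasDerivAt_rpow_const (Or.inl hs.ne')).mul h.exp).congr_deriv ?_
  simp only [weight, rpow_add hs, rpow_sub hs, rpow_one]
  field_simp
  ring

section Combination

variable (a b c : ℝ)

lemma integrableOn_weight_combination (hα : 0 < α) (t : ℝ) :
    IntegrableOn (fun s => a * weight (α - 1) t s + b * weight α t s + c * weight (α + 1) t s)
      (Ioi 0) :=
  (((integrableOn_weight (by linarith) t).const_mul a).add
    ((integrableOn_weight (by linarith) t).const_mul b)).add
    ((integrableOn_weight (by linarith) t).const_mul c)

lemma setIntegral_weight_combination (hα : 0 < α) (t : ℝ) :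
    ∫ s in Ioi 0, (a * weight (α - 1) t s + b * weight α t s + c * weight (α + 1) t s) =
      a * moment (α - 1) t + b * moment α t + c * moment (α + 1) t := by
  rw [integral_add, integral_add, integral_const_mul, integral_const_mul, integral_const_mul]
  · rfl
  all_goals first
    | exact (integrableOn_weight (by linarith) t).const_mul _
    | exact ((integrableOn_weight (by linarith) t).const_mul _).add
        ((integrableOn_weight (by linarith) t).const_mul _)

end Combination

lemma moment_add_one (hα : 0 < α) (t : ℝ) :
    2 * moment (α + 1) t = α * moment (α - 1) t - 2 * t * moment α t := by
  have hderiv : ∀ s ∈ Ioi (0 : ℝ), HasDerivAt (weight α t)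
      (α * weight (α - 1) t s + -2 * t * weight α t s + -2 * weight (α + 1) t s) s :=
    fun _ hs => hasDerivAt_weight hs
  have hint := integrableOn_weight_combination α (-2 * t) (-2) hα t
  have hlim := tendsto_zero_of_hasDerivAt_of_integrableOn_Ioi hderiv hint
    (integrableOn_weight (by linarith) t)
  have h := integral_Ioi_of_hasDerivAt_of_tendsto
    (continuous_weight hα.le).continuousWithinAt hderiv hint hlim
  rw [setIntegral_weight_combination _ _ _ hα, weight_zero hα] at h
  linarith

lemma quadratic_moment_pos (hα : 0 < α) (t x : ℝ) :
    0 < moment (α - 1) t * (x * x) + -2 * moment α t * x + moment (α + 1) t := by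
  have hsq : ∀ s ∈ Ioi (0 : ℝ), (x * s ^ ((α - 1) / 2) - s ^ ((α + 1) / 2)) ^ 2 *
      exp (-(2 * t * s) - s ^ 2) =
        x * x * weight (α - 1) t s + -2 * x * weight α t s + 1 * weight (α + 1) t s := by
    intro s hs
    have e : ∀ p q r : ℝ, p + q = r → s ^ p * s ^ q = s ^ r := fun p q r h => by
      rw [← rpow_add hs, h]
    simp only [weight, ← e ((α - 1) / 2) ((α - 1) / 2) (α - 1) (by ring),
      ← e ((α - 1) / 2) ((α + 1) / 2) α (by ring),
      ← e ((α + 1) / 2) ((α + 1) / 2) (α + 1) (by ring)]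
    ring
  have hpos : 0 < ∫ s in Ioi 0,
      (x * x * weight (α - 1) t s + -2 * x * weight α t s + 1 * weight (α + 1) t s) := by
    refine setIntegral_Ioi_pos (b := max x 0) (integrableOn_weight_combination _ _ _ hα t)
      (fun s hs => hsq s hs ▸ by positivity) fun s hs => ?_
    have hs0 : 0 < s := lt_of_le_of_lt (le_max_right x 0) hs
    rw [← hsq s hs0]
    have hlt : x * s ^ ((α - 1) / 2) < s ^ ((α + 1) / 2) := by
      rw [show (α + 1) / 2 = 1 + (α - 1) / 2 by ring, rpow_add hs0, rpow_one]
      exact mul_lt_mul_of_pos_right (lt_of_le_of_lt (le_max_left x 0) hs) (rpow_pos_of_pos hs0 _)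
    exact mul_pos (sq_pos_of_neg (sub_neg.mpr hlt)) (exp_pos _)
  rw [setIntegral_weight_combination _ _ _ hα] at hpos
  linarith

lemma sq_moment_lt (hα : 0 < α) (t : ℝ) :
    moment α t ^ 2 < moment (α - 1) t * moment (α + 1) t := by
  have h := discrim_lt_zero (moment_pos (by linarith : -1 < α - 1) t).ne'
    (quadratic_moment_pos hα t)
  rw [discrim] at h
  linarith

noncomputable def solution (t : ℝ) : ℝ := -t - 2 * (moment (1 / 2) t / moment (-1 / 2) t)

lemma moment_neg_half_pos (t : ℝ) : 0 < moment (-1 / 2) t := moment_pos (by norm_num) t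

lemma moment_half_pos (t : ℝ) : 0 < moment (1 / 2) t := moment_pos (by norm_num) t

lemma moment_three_halves (t : ℝ) :
    2 * moment (3 / 2) t = moment (-1 / 2) t / 2 - 2 * t * moment (1 / 2) t := by
  have h := moment_add_one (by norm_num : (0 : ℝ) < 1 / 2) t
  rwa [show (1 / 2 : ℝ) + 1 = 3 / 2 by norm_num, show (1 / 2 : ℝ) - 1 = -1 / 2 by norm_num,
    one_div_mul_eq_div] at h

lemma sq_moment_half_lt (t : ℝ) :
    moment (1 / 2) t ^ 2 < moment (-1 / 2) t * moment (3 / 2) t := by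
  have h := sq_moment_lt (by norm_num : (0 : ℝ) < 1 / 2) t
  rwa [show (1 / 2 : ℝ) + 1 = 3 / 2 by norm_num, show (1 / 2 : ℝ) - 1 = -1 / 2 by norm_num] at h

lemma solution_lt (t : ℝ) : solution t < -t := by
  have := div_pos (moment_half_pos t) (moment_neg_half_pos t)
  rw [solution]
  linarith

lemma neg_sqrt_lt_solution (t : ℝ) : -√(t ^ 2 + 1) < solution t := by
  have hA := moment_neg_half_pos t
  have hibp := moment_three_halves t
  have hcs := sq_moment_half_lt t
  rw [solution]
  set A := moment (-1 / 2) t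
  set B := moment (1 / 2) t
  have hsq : (t + 2 * (B / A)) ^ 2 < t ^ 2 + 1 := by
    rw [← sub_neg, show (t + 2 * (B / A)) ^ 2 - (t ^ 2 + 1) =
      (4 * B ^ 2 + 4 * t * A * B - A ^ 2) / A ^ 2 by field_simp; ring]
    exact div_neg_of_neg_of_pos (by nlinarith) (by positivity)
  linarith [lt_sqrt_of_sq_lt hsq]

lemma hasDerivAt_solution (t : ℝ) : HasDerivAt solution (t ^ 2 - solution t ^ 2) t := by
  have hA := hasDerivAt_moment (by norm_num : (-1 : ℝ) < -1 / 2) t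
  have hB := hasDerivAt_moment (by norm_num : (-1 : ℝ) < 1 / 2) t
  rw [show (-1 / 2 : ℝ) + 1 = 1 / 2 by norm_num] at hA
  rw [show (1 / 2 : ℝ) + 1 = 3 / 2 by norm_num] at hB
  refine ((hasDerivAt_id t).neg.sub
    ((hB.div hA (moment_neg_half_pos t).ne').const_mul 2)).congr_deriv ?_
  have hA0 := (moment_neg_half_pos t).ne'
  have hC : moment (3 / 2) t = moment (-1 / 2) t / 4 - t * moment (1 / 2) t := by
    linarith [moment_three_halves t]
  rw [solution, hC]
  -- otherwise `field_simp` rewrites the index `-1 / 2` to `-(1 / 2)` in some occurrences only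
  set A := moment (-1 / 2) t
  field_simp
  ring

lemma strictAntiOn_solution : StrictAntiOn solution (Ici 0) := by
  refine strictAntiOn_of_hasDerivWithinAt_neg (convex_Ici 0)
    (fun t _ => (hasDerivAt_solution t).continuousAt.continuousWithinAt)
    (fun t _ => (hasDerivAt_solution t).hasDerivWithinAt) fun t ht => ?_
  rw [interior_Ici, mem_Ioi] at ht
  nlinarith [solution_lt t]

end Riccati

/-- There is a decreasing solution `y*` of `y' = t² − y²` with `−t > y*(t) > −√(t²+1)` for `t ≥ 0`. -/
theorem stmt_6 :
    ∃ ystar : ℝ → ℝ,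
      (∀ t ∈ Set.Ici (0 : ℝ), HasDerivAt ystar (t ^ 2 - (ystar t) ^ 2) t) ∧
      StrictAntiOn ystar (Set.Ici (0 : ℝ)) ∧
      ∀ t ∈ Set.Ici (0 : ℝ), ystar t < -t ∧ -Real.sqrt (t ^ 2 + 1) < ystar t :=
  ⟨Riccati.solution, fun t _ => Riccati.hasDerivAt_solution t, Riccati.strictAntiOn_solution,
    fun t _ => ⟨Riccati.solution_lt t, Riccati.neg_sqrt_lt_solution t⟩⟩
end

section
/- Let y(t) solve y' = t² − y² with y(t₀) = y₀, t₀ ≥ 0. If y₀ < y*(t₀), where y* is the critical decreasing solution satisfying −t > y*(t) > −√(t²+1) for t ≥ 0, then y(t) is decreasing for t ≥ t₀ and blows up to −∞ in finite time. -/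
/-!
Subtracting the separatrix linearizes the Riccati equation: if `y = y* + 1/v`, then
`y' = t² - y²` is equivalent to the linear equation `v' = 2 y* v + 1`. Starting below `y*`
means `v(t₀) < 0`, and while `v < 0` the term `2 y* v` is nonnegative because `y* < -t ≤ 0`,
so `v' ≥ 1`. Hence `v` reaches `0` at a finite time `T`, where `y = y* + 1/v` tends to `-∞`.
Before `T`, `y < y* < -t`, so `y' = t² - y² < 0`.
-/

open Filter Topology Real

section LinearODE

variable {a : ℝ → ℝ} {t₀ v₀ : ℝ}

/-- Variation of constants solution of `v' = a v + 1`, `v t₀ = v₀`. -/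
noncomputable def linearODESol (a : ℝ → ℝ) (t₀ v₀ t : ℝ) : ℝ :=
  exp (∫ s in t₀..t, a s) * (v₀ + ∫ s in t₀..t, exp (-∫ r in t₀..s, a r))

@[simp]
lemma linearODESol_self : linearODESol a t₀ v₀ t₀ = v₀ := by
  simp [linearODESol]

lemma continuous_exp_neg_integral (ha : Continuous a) (t₀ : ℝ) :
    Continuous fun s => exp (-∫ r in t₀..s, a r) :=
  (intervalIntegral.continuous_primitive (fun _ _ => ha.intervalIntegrable _ _) t₀).neg.rexp

lemma hasDerivAt_linearODESol (ha : Continuous a) (t₀ v₀ t : ℝ) :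
    HasDerivAt (linearODESol a t₀ v₀) (a t * linearODESol a t₀ v₀ t + 1) t := by
  have hG := (ha.integral_hasStrictDerivAt t₀ t).hasDerivAt.exp
  have hF := ((continuous_exp_neg_integral ha t₀).integral_hasStrictDerivAt t₀ t).hasDerivAt
  refine (hG.mul (hF.const_add v₀)).congr_deriv ?_
  rw [linearODESol, exp_neg]
  field_simp

lemma sub_le_integral_exp_neg_integral (ha : Continuous a) (ha_nonpos : ∀ t, t₀ ≤ t → a t ≤ 0)
    {t : ℝ} (ht : t₀ ≤ t) : t - t₀ ≤ ∫ s in t₀..t, exp (-∫ r in t₀..s, a r) := by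
  have hG_nonpos : ∀ s, t₀ ≤ s → ∫ r in t₀..s, a r ≤ 0 := fun s hs => by
    simpa using intervalIntegral.integral_mono_on (μ := MeasureTheory.volume) hs
      (ha.intervalIntegrable _ _) intervalIntegrable_const fun r hr => ha_nonpos r hr.1
  simpa using intervalIntegral.integral_mono_on (μ := MeasureTheory.volume) ht
    intervalIntegrable_const
    ((continuous_exp_neg_integral ha t₀).intervalIntegrable _ _)
    fun s hs => one_le_exp (neg_nonneg.2 (hG_nonpos s hs.1))

/-- With `a ≤ 0` a negative solution of `v' = a v + 1` grows at rate at least `1`, so it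
reaches `0` after time at most `-v₀`. -/
lemma exists_linearODESol_eq_zero (ha : Continuous a) (ha_nonpos : ∀ t, t₀ ≤ t → a t ≤ 0)
    (hv₀ : v₀ < 0) :
    ∃ T > t₀, linearODESol a t₀ v₀ T = 0 ∧ ∀ t ∈ Set.Ico t₀ T, linearODESol a t₀ v₀ t < 0 := by
  set F := fun t => ∫ s in t₀..t, exp (-∫ r in t₀..s, a r)
  have hF t : HasDerivAt F (exp (-∫ r in t₀..t, a r)) t :=
    ((continuous_exp_neg_integral ha t₀).integral_hasStrictDerivAt t₀ t).hasDerivAt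
  have hF_mono : StrictMono F := strictMono_of_hasDerivAt_pos hF fun _ => exp_pos _
  have hF₀ : F t₀ = 0 := intervalIntegral.integral_same
  have hF_end : -v₀ ≤ F (t₀ - v₀) := by
    simpa using sub_le_integral_exp_neg_integral ha ha_nonpos (by linarith : t₀ ≤ t₀ - v₀)
  obtain ⟨T, hT, hFT⟩ := intermediate_value_Icc (by linarith : t₀ ≤ t₀ - v₀)
    (continuous_iff_continuousAt.2 fun t => (hF t).continuousAt).continuousOn
    (⟨by rw [hF₀]; linarith, hF_end⟩ : -v₀ ∈ Set.Icc (F t₀) (F (t₀ - v₀)))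
  have hT₀ : t₀ < T := hT.1.lt_of_ne fun h => by subst h; linarith
  refine ⟨T, hT₀, mul_eq_zero_of_right _ (by simp only [F] at hFT; linarith), fun t ht => ?_⟩
  have : F t < F T := hF_mono ht.2
  exact mul_neg_of_pos_of_neg (exp_pos _) (by simp only [F] at this hFT; linarith)

end LinearODE

lemma hasDerivAt_add_inv_of_riccati {ystar v : ℝ → ℝ} {q t : ℝ}
    (hstar : HasDerivAt ystar (q - ystar t ^ 2) t)
    (hv : HasDerivAt v (2 * ystar t * v t + 1) t) (hvt : v t ≠ 0) :
    HasDerivAt (fun s => ystar s + (v s)⁻¹) (q - (ystar t + (v t)⁻¹) ^ 2) t := by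
  refine (hstar.add (hv.inv hvt)).congr_deriv ?_
  field_simp
  ring

lemma tendsto_inv_nhdsLT_atBot_of_neg {v : ℝ → ℝ} {s T : ℝ} (hsT : s < T)
    (hv : ContinuousAt v T) (hvT : v T = 0) (hneg : ∀ t ∈ Set.Ioo s T, v t < 0) :
    Tendsto (fun t => (v t)⁻¹) (𝓝[<] T) atBot := by
  have hv_lim : Tendsto v (𝓝[<] T) (𝓝[<] 0) := by
    refine tendsto_nhdsWithin_iff.2 ⟨hvT ▸ hv.continuousWithinAt, ?_⟩
    filter_upwards [Ioo_mem_nhdsLT hsT] with t ht using hneg t ht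
  exact tendsto_inv_nhdsLT_zero.comp hv_lim

theorem exists_riccati_blowup_of_lt {q ystar : ℝ → ℝ} {t₀ y₀ : ℝ}
    (hstar : ∀ t, t₀ ≤ t → HasDerivAt ystar (q t - ystar t ^ 2) t)
    (hstar_neg : ∀ t, t₀ ≤ t → ystar t < 0) (hy₀ : y₀ < ystar t₀) :
    ∃ T > t₀, ∃ y : ℝ → ℝ, y t₀ = y₀ ∧
      (∀ t ∈ Set.Ico t₀ T, HasDerivAt y (q t - y t ^ 2) t ∧ y t < ystar t) ∧
      Tendsto y (𝓝[<] T) atBot := by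
  -- `ystar` is frozen left of `t₀` to get a coefficient that is continuous on all of `ℝ`.
  set z := fun t => ystar (max t t₀)
  have hz : Continuous z :=
    (ContinuousOn.comp_continuous (s := Set.Ici t₀)
      (fun t ht => (hstar t ht).continuousAt.continuousWithinAt)
      (continuous_id.max continuous_const) fun t => le_max_right t t₀ :)
  have hz_nonpos t (ht : t₀ ≤ t) : 2 * z t ≤ 0 := by
    simp only [z, max_eq_left ht]; linarith [hstar_neg t ht]
  have ha : Continuous fun t => 2 * z t := continuous_const.mul hz
  obtain ⟨T, hT, hvT, hv_neg⟩ := exists_linearODESol_eq_zero ha hz_nonpos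
    (inv_lt_zero.2 (sub_neg.2 hy₀))
  set v := linearODESol (fun t => 2 * z t) t₀ (y₀ - ystar t₀)⁻¹
  have hv t (ht : t₀ ≤ t) : HasDerivAt v (2 * ystar t * v t + 1) t := by
    simpa [z, max_eq_left ht] using hasDerivAt_linearODESol ha _ _ t
  refine ⟨T, hT, fun t => ystar t + (v t)⁻¹, by simp [v],
    fun t ht => ⟨hasDerivAt_add_inv_of_riccati (hstar t ht.1) (hv t ht.1) (hv_neg t ht).ne,
      by linarith [inv_lt_zero.2 (hv_neg t ht)]⟩, ?_⟩
  exact ((hstar T hT.le).continuousAt.tendsto.mono_left nhdsWithin_le_nhds).add_atBot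
    (tendsto_inv_nhdsLT_atBot_of_neg hT (hv T hT.le).continuousAt hvT
      fun t ht => hv_neg t ⟨ht.1.le, ht.2⟩)

/-- Solutions of `y' = t² − y²` starting below the critical solution `y*` are decreasing
and blow up to `−∞` in finite time. -/
theorem stmt_7 (t₀ y₀ : ℝ) (ht₀ : 0 ≤ t₀) (ystar : ℝ → ℝ)
    (hstar : ∀ t ∈ Set.Ici (0 : ℝ), HasDerivAt ystar (t ^ 2 - (ystar t) ^ 2) t)
    (hbound : ∀ t ∈ Set.Ici (0 : ℝ), ystar t < -t ∧ -Real.sqrt (t ^ 2 + 1) < ystar t)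
    (hy₀ : y₀ < ystar t₀) :
    ∃ Tstar > t₀, ∃ y : ℝ → ℝ,
      y t₀ = y₀ ∧
      (∀ t ∈ Set.Ico t₀ Tstar, HasDerivAt y (t ^ 2 - (y t) ^ 2) t) ∧
      StrictAntiOn y (Set.Ico t₀ Tstar) ∧
      Tendsto y (nhdsWithin Tstar (Set.Iio Tstar)) atBot := by
  have hbelow t (ht : t₀ ≤ t) : ystar t < -t := (hbound t (ht₀.trans ht)).1
  obtain ⟨T, hT, y, hy₀', hy, hlim⟩ := exists_riccati_blowup_of_lt (q := fun t => t ^ 2)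
    (fun t ht => hstar t (ht₀.trans ht)) (fun t ht => by linarith [hbelow t ht]) hy₀
  refine ⟨T, hT, y, hy₀', fun t ht => (hy t ht).1, ?_, hlim⟩
  refine strictAntiOn_of_hasDerivWithinAt_neg (f' := fun t => t ^ 2 - y t ^ 2) (convex_Ico t₀ T)
    (fun t ht => (hy t ht).1.continuousAt.continuousWithinAt) ?_ ?_ <;> rw [interior_Ico]
  · exact fun t ht => (hy t (Set.Ioo_subset_Ico_self ht)).1.hasDerivWithinAt
  · intro t ht
    have hyt : y t < -t := (hy t (Set.Ioo_subset_Ico_self ht)).2.trans (hbelow t ht.1.le)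
    nlinarith [mul_pos (by linarith : 0 < -y t - t) (by linarith [ht.1] : 0 < t - y t)]
end

section
/- Let y(t) solve y' = t² − y² with y(t₀) = y₀ > y*(t₀), t₀ ≥ 0, where y* is the critical solution. Then for every δ ∈ (0,1) there exists t_δ ≥ t₀ such that |y(t) − t| ≤ 1/(2(1−δ)t) for all t ≥ t_δ. -/
/-!
Uniqueness for `y' = t² − y²` keeps `y` above the critical solution `y*`. If `y` stayed below `−t`,
the gap `g = y − y*` would satisfy `(log g)' = −(y + y*) ≥ 1` while `g < √(t² + 1) − t ≤ 1`; so `y`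
crosses `−t`, and it cannot cross back. For `0 < c < 1` the curves `t ± 1/(2ct)` are eventually
barriers (at a contact point the field points between them), and `y` must enter the region between
them: above it `−y` grows linearly, below it `y` is nondecreasing and then `y − t` grows linearly.
-/

open Set Filter Topology

section Fences

variable {f B f' B' : ℝ → ℝ}

theorem exists_forall_ge_add_mul_sub_le {k : ℝ} (hf : ∀ᶠ x in atTop, HasDerivAt f (f' x) x)
    (hf' : ∀ᶠ x in atTop, k ≤ f' x) : ∃ a, ∀ t ≥ a, f a + k * (t - a) ≤ f t := by
  obtain ⟨a, ha⟩ := eventually_atTop.1 (hf.and hf')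
  refine ⟨a, fun t ht => ?_⟩
  have hline (x : ℝ) : HasDerivAt (fun t => f a + k * (t - a)) k x := by
    simpa using ((hasDerivAt_id x).sub_const a).const_mul k |>.const_add (f a)
  refine image_le_of_deriv_right_le_deriv_boundary
    (fun x _ => (hline x).continuousAt.continuousWithinAt)
    (fun x _ => (hline x).hasDerivWithinAt) (by simp)
    (fun x hx => (ha x hx.1).1.continuousAt.continuousWithinAt)
    (fun x hx => (ha x hx.1).1.hasDerivWithinAt) (fun x hx => (ha x hx.1).2) ⟨ht, le_rfl⟩

theorem tendsto_atTop_of_pos_le_deriv {k : ℝ} (hk : 0 < k)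
    (hf : ∀ᶠ x in atTop, HasDerivAt f (f' x) x) (hf' : ∀ᶠ x in atTop, k ≤ f' x) :
    Tendsto f atTop atTop := by
  obtain ⟨a, ha⟩ := exists_forall_ge_add_mul_sub_le hf hf'
  refine tendsto_atTop_mono' _ (eventually_atTop.2 ⟨a, ha⟩) ?_
  exact tendsto_atTop_add_const_left _ _
    ((tendsto_atTop_add_const_right _ _ tendsto_id).const_mul_atTop hk)

theorem eventually_le_of_frequently_le (hf : ∀ᶠ x in atTop, HasDerivAt f (f' x) x)
    (hB : ∀ᶠ x in atTop, HasDerivAt B (B' x) x)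
    (hcontact : ∀ᶠ x in atTop, f x = B x → f' x < B' x) (hfreq : ∃ᶠ x in atTop, f x ≤ B x) :
    ∀ᶠ x in atTop, f x ≤ B x := by
  obtain ⟨a, ha⟩ := eventually_atTop.1 ((hf.and hB).and hcontact)
  obtain ⟨s, hsa, hs⟩ := frequently_atTop.1 hfreq a
  refine eventually_atTop.2 ⟨s, fun t ht => ?_⟩
  have h (x) (hx : s ≤ x) := ha x (hsa.trans hx)
  exact image_le_of_deriv_right_lt_deriv_boundary'
    (fun x hx => (h x hx.1).1.1.continuousAt.continuousWithinAt)
    (fun x hx => (h x hx.1).1.1.hasDerivWithinAt) hs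
    (fun x hx => (h x hx.1).1.2.continuousAt.continuousWithinAt)
    (fun x hx => (h x hx.1).1.2.hasDerivWithinAt) (fun x hx => (h x hx.1).2) ⟨ht, le_rfl⟩

end Fences

theorem tendsto_inv_two_mul_mul {c : ℝ} (hc : 0 < c) :
    Tendsto (fun t => (2 * c * t)⁻¹) atTop (𝓝 0) :=
  tendsto_inv_atTop_zero.comp (tendsto_id.const_mul_atTop (by positivity))

theorem hasDerivAt_inv_two_mul_mul {c : ℝ} (hc : 0 < c) {t : ℝ} (ht : 0 < t) :
    HasDerivAt (fun t => (2 * c * t)⁻¹) (-(2 * c) * (2 * c * t)⁻¹ ^ 2) t := by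
  refine (((hasDerivAt_id t).const_mul (2 * c)).inv (by positivity)).congr_deriv ?_
  simp only [id, mul_one]
  field_simp

def IsRiccatiSolOn (y : ℝ → ℝ) (s : Set ℝ) : Prop :=
  ∀ t ∈ s, HasDerivAt y (t ^ 2 - y t ^ 2) t

theorem lipschitzOnWith_sq_sub (t R : ℝ) :
    LipschitzOnWith (2 * R).toNNReal (fun x : ℝ => t ^ 2 - x ^ 2) (Icc (-R) R) := by
  refine LipschitzOnWith.of_dist_le_mul fun a ha b hb => ?_
  have hR : 0 ≤ R := by linarith [ha.1, ha.2]
  have hab : |a + b| ≤ 2 * R := abs_le.2 ⟨by linarith [ha.1, hb.1], by linarith [ha.2, hb.2]⟩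
  rw [Real.coe_toNNReal _ (by linarith), Real.dist_eq, Real.dist_eq,
    show t ^ 2 - a ^ 2 - (t ^ 2 - b ^ 2) = -((a + b) * (a - b)) by ring, abs_neg, abs_mul]
  exact mul_le_mul_of_nonneg_right hab (abs_nonneg _)

namespace IsRiccatiSolOn

variable {y z : ℝ → ℝ}

theorem mono {s s' : Set ℝ} (hy : IsRiccatiSolOn y s) (hs : s' ⊆ s) : IsRiccatiSolOn y s' :=
  fun t ht => hy t (hs ht)

theorem continuousOn {s : Set ℝ} (hy : IsRiccatiSolOn y s) : ContinuousOn y s :=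
  HasDerivAt.continuousOn hy

theorem eqOn_Icc_of_eq_right {a b : ℝ} (hy : IsRiccatiSolOn y (Icc a b))
    (hz : IsRiccatiSolOn z (Icc a b)) (hb : y b = z b) : EqOn y z (Icc a b) := by
  obtain ⟨Cy, hCy⟩ := isCompact_Icc.exists_bound_of_continuousOn hy.continuousOn
  obtain ⟨Cz, hCz⟩ := isCompact_Icc.exists_bound_of_continuousOn hz.continuousOn
  have hmem {w : ℝ → ℝ} {C : ℝ} (hC : ∀ t ∈ Icc a b, ‖w t‖ ≤ C) (hCR : C ≤ max Cy Cz) :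
      ∀ t ∈ Ioc a b, w t ∈ Icc (-max Cy Cz) (max Cy Cz) := fun t ht =>
    abs_le.1 ((Real.norm_eq_abs _ ▸ hC t (Ioc_subset_Icc_self ht)).trans hCR)
  exact ODE_solution_unique_of_mem_Icc_left (v := fun t x => t ^ 2 - x ^ 2)
    (fun t _ => lipschitzOnWith_sq_sub t _) hy.continuousOn
    (fun t ht => (hy t (Ioc_subset_Icc_self ht)).hasDerivWithinAt) (hmem hCy (le_max_left _ _))
    hz.continuousOn (fun t ht => (hz t (Ioc_subset_Icc_self ht)).hasDerivWithinAt)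
    (hmem hCz (le_max_right _ _)) hb

theorem lt_of_lt {a : ℝ} (hy : IsRiccatiSolOn y (Ici a)) (hz : IsRiccatiSolOn z (Ici a))
    (ha : y a < z a) : ∀ t ∈ Ici a, y t < z t := by
  intro t ht
  by_contra! hle
  obtain ⟨s, hs, hs0⟩ := intermediate_value_Icc' (f := fun s => z s - y s) ht
    ((hz.continuousOn.mono Icc_subset_Ici_self).sub (hy.continuousOn.mono Icc_subset_Ici_self))
    (show (0 : ℝ) ∈ Icc (z t - y t) (z a - y a) from ⟨by linarith, by linarith⟩)
  have hsub : Icc a s ⊆ Ici a := Icc_subset_Ici_self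
  have := (hy.mono hsub).eqOn_Icc_of_eq_right (hz.mono hsub) (by simp only at hs0; linarith)
    ⟨le_rfl, hs.1⟩
  linarith

theorem eventually_hasDerivAt {a : ℝ} (hy : IsRiccatiSolOn y (Ici a)) :
    ∀ᶠ t in atTop, HasDerivAt y (t ^ 2 - y t ^ 2) t :=
  (eventually_ge_atTop a).mono hy

theorem frequently_neg_lt {t₀ : ℝ} {ystar : ℝ → ℝ} (hy : IsRiccatiSolOn y (Ici t₀))
    (hstar : IsRiccatiSolOn ystar (Ici 0))
    (hbound : ∀ t ∈ Ici (0 : ℝ), ystar t < -t ∧ -√(t ^ 2 + 1) < ystar t)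
    (habove : ∀ t ∈ Ici t₀, ystar t < y t) : ∃ᶠ t in atTop, -t < y t := by
  by_contra h
  simp only [not_frequently, not_lt] at h
  have hlog : Tendsto (fun t => Real.log (y t - ystar t)) atTop atTop := by
    refine tendsto_atTop_of_pos_le_deriv one_pos (f' := fun t => -(y t + ystar t)) ?_ ?_
    · filter_upwards [eventually_ge_atTop t₀, eventually_ge_atTop 0] with t ht ht0
      have hgap := (habove t ht).ne'
      refine ((hy t ht).sub (hstar t ht0)).log (sub_ne_zero.2 hgap) |>.congr_deriv ?_
      simp only [Pi.sub_apply]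
      field_simp [sub_ne_zero.2 hgap]
      ring
    · filter_upwards [h, eventually_ge_atTop 1] with t hyt ht1
      linarith [(hbound t (by simp only [mem_Ici]; linarith)).1]
  have hgap_lt_one : ∀ᶠ t in atTop, Real.log (y t - ystar t) < 0 := by
    filter_upwards [h, eventually_ge_atTop t₀, eventually_ge_atTop 0] with t hyt ht ht0
    have hsqrt : √(t ^ 2 + 1) ≤ t + 1 := Real.sqrt_le_iff.2 ⟨by linarith, by nlinarith⟩
    exact Real.log_neg (by linarith [habove t ht]) (by linarith [(hbound t ht0).2])
  obtain ⟨t, hpos, hneg⟩ := ((hlog.eventually_ge_atTop 0).and hgap_lt_one).exists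
  linarith

theorem eventually_neg_le {t₀ : ℝ} {ystar : ℝ → ℝ} (hy : IsRiccatiSolOn y (Ici t₀))
    (hstar : IsRiccatiSolOn ystar (Ici 0))
    (hbound : ∀ t ∈ Ici (0 : ℝ), ystar t < -t ∧ -√(t ^ 2 + 1) < ystar t)
    (habove : ∀ t ∈ Ici t₀, ystar t < y t) : ∀ᶠ t in atTop, -t ≤ y t := by
  refine eventually_le_of_frequently_le (f' := fun _ => -1)
    (Eventually.of_forall fun t => (hasDerivAt_id t).neg) hy.eventually_hasDerivAt
    (Eventually.of_forall fun t ht => ?_)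
    ((hy.frequently_neg_lt hstar hbound habove).mono fun _ => le_of_lt)
  rw [← ht]
  simp

section Barriers

variable {c : ℝ}

theorem eventually_le_add_inv {t₀ : ℝ} (hy : IsRiccatiSolOn y (Ici t₀)) (hc : 0 < c) :
    ∀ᶠ t in atTop, y t ≤ t + (2 * c * t)⁻¹ := by
  have hsq : ∀ᶠ t in atTop, t ^ 2 - (t + (2 * c * t)⁻¹) ^ 2 = -c⁻¹ - (2 * c * t)⁻¹ ^ 2 := by
    filter_upwards [eventually_gt_atTop 0] with t ht
    field_simp
    ring
  refine eventually_le_of_frequently_le hy.eventually_hasDerivAt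
    (B' := fun t => 1 + -(2 * c) * (2 * c * t)⁻¹ ^ 2)
    ((eventually_gt_atTop 0).mono fun t ht =>
      (hasDerivAt_id t).add (hasDerivAt_inv_two_mul_mul hc ht)) ?_ ?_
  · have hlim := (tendsto_inv_two_mul_mul hc).pow 2
    have hlt : ∀ᶠ t in atTop, -c⁻¹ - (2 * c * t)⁻¹ ^ 2 < 1 + -(2 * c) * (2 * c * t)⁻¹ ^ 2 :=
      (tendsto_const_nhds.sub hlim).eventually_lt (tendsto_const_nhds.add (hlim.const_mul _))
        (by linarith [inv_pos.2 hc])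
    filter_upwards [hsq, hlt] with t hsq hlt hcontact
    rwa [hcontact, hsq]
  · by_contra h
    simp only [not_frequently, not_le] at h
    have hdown : Tendsto (fun t => -y t) atTop atTop := by
      refine tendsto_atTop_of_pos_le_deriv (inv_pos.2 hc)
        (hy.eventually_hasDerivAt.mono fun t h => h.neg) ?_
      filter_upwards [h, hsq, eventually_gt_atTop 0] with t hyt hsq ht
      have : (t + (2 * c * t)⁻¹) ^ 2 < y t ^ 2 := pow_lt_pow_left₀ hyt (by positivity) two_ne_zero
      nlinarith
    obtain ⟨t, hneg, hyt, ht⟩ :=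
      ((hdown.eventually_gt_atTop 0).and (h.and (eventually_gt_atTop 0))).exists
    have : 0 < (2 * c * t)⁻¹ := by positivity
    linarith

theorem eventually_sub_inv_le {t₀ : ℝ} (hy : IsRiccatiSolOn y (Ici t₀)) (hc0 : 0 < c)
    (hc1 : c < 1) (hneg : ∀ᶠ t in atTop, -t ≤ y t) :
    ∀ᶠ t in atTop, t - (2 * c * t)⁻¹ ≤ y t := by
  have hsq : ∀ᶠ t in atTop, t ^ 2 - (t - (2 * c * t)⁻¹) ^ 2 = c⁻¹ - (2 * c * t)⁻¹ ^ 2 := by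
    filter_upwards [eventually_gt_atTop 0] with t ht
    field_simp
    ring
  have hlim := (tendsto_inv_two_mul_mul hc0).pow 2
  have hc1' : 1 < c⁻¹ := (one_lt_inv₀ hc0).2 hc1
  refine eventually_le_of_frequently_le (f' := fun t => 1 - -(2 * c) * (2 * c * t)⁻¹ ^ 2)
    ((eventually_gt_atTop 0).mono fun t ht =>
      (hasDerivAt_id t).sub (hasDerivAt_inv_two_mul_mul hc0 ht)) hy.eventually_hasDerivAt ?_ ?_
  · have hlt : ∀ᶠ t in atTop, 1 - -(2 * c) * (2 * c * t)⁻¹ ^ 2 < c⁻¹ - (2 * c * t)⁻¹ ^ 2 :=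
      (tendsto_const_nhds.sub (hlim.const_mul _)).eventually_lt (tendsto_const_nhds.sub hlim)
        (by simpa using hc1')
    filter_upwards [hsq, hlt] with t hsq hlt hcontact
    rwa [← hcontact, hsq]
  · by_contra h
    simp only [not_frequently, not_le] at h
    have hinc : ∀ᶠ t in atTop, (0 : ℝ) ≤ t ^ 2 - y t ^ 2 := by
      filter_upwards [h, hneg, eventually_gt_atTop 0] with t hyt hyt' ht
      have : 0 < (2 * c * t)⁻¹ := by positivity
      nlinarith
    obtain ⟨a, ha⟩ := exists_forall_ge_add_mul_sub_le hy.eventually_hasDerivAt hinc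
    set k := (c⁻¹ - 1) / 2
    have hrate : ∀ᶠ t in atTop, k ≤ t ^ 2 - y t ^ 2 - 1 := by
      have hbig : ∀ᶠ t : ℝ in atTop, k + 1 + y a ^ 2 ≤ t ^ 2 :=
        (tendsto_pow_atTop two_ne_zero).eventually_ge_atTop _
      have hnear : ∀ᶠ t in atTop, k < c⁻¹ - (2 * c * t)⁻¹ ^ 2 - 1 :=
        tendsto_const_nhds.eventually_lt ((tendsto_const_nhds.sub hlim).sub_const 1)
          (by simp only [k]; linarith)
      filter_upwards [h, hsq, hbig, hnear, eventually_ge_atTop a, eventually_gt_atTop 0]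
        with t hyt hsq hbig hnear hta ht
      have hya : y a ≤ y t := by simpa using ha t hta
      -- `y a ≤ y t < t - (2ct)⁻¹`, so `y t ^ 2` is at most `y a ^ 2` or `(t - (2ct)⁻¹) ^ 2`
      rcases le_or_gt (y t) 0 with hy0 | hy0
      · nlinarith
      · nlinarith [pow_lt_pow_left₀ hyt hy0.le two_ne_zero]
    have hup : Tendsto (fun t => y t - t) atTop atTop :=
      tendsto_atTop_of_pos_le_deriv (by simp only [k]; linarith)
        (hy.eventually_hasDerivAt.mono fun t h => h.sub (hasDerivAt_id t)) hrate
    obtain ⟨t, hpos, hyt, ht⟩ :=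
      ((hup.eventually_gt_atTop 0).and (h.and (eventually_gt_atTop 0))).exists
    have : 0 < (2 * c * t)⁻¹ := by positivity
    linarith

end Barriers

end IsRiccatiSolOn

/-- Solutions of `y' = t² − y²` starting above the critical solution `y*` are asymptotic to
the line `y = t`: for every `δ ∈ (0,1)` eventually `|y(t) − t| ≤ 1/(2(1−δ)t)`. -/
theorem stmt_8 (t₀ y₀ : ℝ) (ht₀ : 0 ≤ t₀) (ystar : ℝ → ℝ)
    (hstar : ∀ t ∈ Set.Ici (0 : ℝ), HasDerivAt ystar (t ^ 2 - (ystar t) ^ 2) t)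
    (hbound : ∀ t ∈ Set.Ici (0 : ℝ), ystar t < -t ∧ -Real.sqrt (t ^ 2 + 1) < ystar t)
    (y : ℝ → ℝ) (hy₀ : y t₀ = y₀) (habove : ystar t₀ < y₀)
    (hy : ∀ t ∈ Set.Ici t₀, HasDerivAt y (t ^ 2 - (y t) ^ 2) t) :
    ∀ δ ∈ Set.Ioo (0 : ℝ) 1, ∃ tδ ≥ t₀, ∀ t ≥ tδ, |y t - t| ≤ 1 / (2 * (1 - δ) * t) := by
  rintro δ ⟨hδ0, hδ1⟩
  have hy : IsRiccatiSolOn y (Ici t₀) := hy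
  have hstar : IsRiccatiSolOn ystar (Ici 0) := hstar
  have hcomp : ∀ t ∈ Ici t₀, ystar t < y t :=
    (hstar.mono (Ici_subset_Ici.2 ht₀)).lt_of_lt hy (hy₀ ▸ habove)
  have hneg := hy.eventually_neg_le hstar hbound hcomp
  obtain ⟨T, hT⟩ := eventually_atTop.1 <|
    (hy.eventually_le_add_inv (c := 1 - δ) (by linarith)).and
      (hy.eventually_sub_inv_le (c := 1 - δ) (by linarith) (by linarith) hneg)
  refine ⟨max T t₀, le_max_right _ _, fun t ht => ?_⟩
  obtain ⟨hupper, hlower⟩ := hT t (le_of_max_le_left ht)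
  rw [abs_le, one_div]
  constructor <;> linarith
end

section
/- With the same rates c^±, set 𝓖_N(m,h) = (4/N²)(c⁺(m,h) + c⁻(m,h)) and Λ(m,h) = 1 − m·tanh(β(m+h)). There exists c > 0 such that |N·𝓖_N(m,h) − 2Λ(m,h)| ≤ c/N uniformly in m ∈ [−1,1], |h| ≤ h_c, for all N large enough. -/
lemma tanh_hasDerivAt (x : ℝ) :
    HasDerivAt Real.tanh (1 / Real.cosh x ^ 2) x := by
  have h := (Real.hasDerivAt_sinh x).div (Real.hasDerivAt_cosh x)
    (ne_of_gt (Real.cosh_pos x))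
  have heq : (Real.cosh x * Real.cosh x - Real.sinh x * Real.sinh x) / Real.cosh x ^ 2
      = 1 / Real.cosh x ^ 2 := by
    rw [show Real.cosh x * Real.cosh x - Real.sinh x * Real.sinh x
        = Real.cosh x ^ 2 - Real.sinh x ^ 2 by ring, Real.cosh_sq_sub_sinh_sq]
  rw [heq] at h
  have ht : Real.tanh = fun y => Real.sinh y / Real.cosh y :=
    funext Real.tanh_eq_sinh_div_cosh
  rw [ht]
  exact h

lemma tanh_lip (a b : ℝ) : |Real.tanh a - Real.tanh b| ≤ |a - b| := by
  have := Convex.norm_image_sub_le_of_norm_hasDerivWithin_le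
    (f := Real.tanh) (f' := fun x => 1 / Real.cosh x ^ 2) (s := Set.univ)
    (fun x _ => (tanh_hasDerivAt x).hasDerivWithinAt) (C := 1)
    (fun x _ => by
      rw [Real.norm_eq_abs, abs_of_nonneg (by positivity)]
      rw [div_le_one (by positivity)]
      nlinarith [Real.one_le_cosh x])
    convex_univ (Set.mem_univ b) (Set.mem_univ a)
  simpa using this

lemma sig_plus (x : ℝ) :
    Real.exp x / (Real.exp (-x) + Real.exp x) = (1 + Real.tanh x) / 2 := by
  rw [Real.tanh_eq_sinh_div_cosh, Real.sinh_eq, Real.cosh_eq]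
  have h : 0 < Real.exp (-x) + Real.exp x := by positivity
  have h2 : 0 < (Real.exp x + Real.exp (-x)) / 2 := by positivity
  field_simp
  ring

lemma sig_minus (x : ℝ) :
    Real.exp (-x) / (Real.exp (-x) + Real.exp x) = (1 - Real.tanh x) / 2 := by
  rw [Real.tanh_eq_sinh_div_cosh, Real.sinh_eq, Real.cosh_eq]
  have h : 0 < Real.exp (-x) + Real.exp x := by positivity
  have h2 : 0 < (Real.exp x + Real.exp (-x)) / 2 := by positivity
  field_simp
  ring

/-- The rescaled quadratic-variation rate `N·𝓖_N(m,h) = (4/N)(c⁺ + c⁻)` is uniformly `c/N`-close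
to `2Λ(m,h)` with `Λ(m,h) = 1 − m·tanh(β(m+h))` on `[-1,1] × [-h_c,h_c]`. -/
theorem stmt_12 (β h_c : ℝ) (hβ : 0 < β) (hhc : 0 < h_c) :
    ∃ c : ℝ, 0 < c ∧ ∃ N₀ : ℕ, ∀ N : ℕ, N₀ ≤ N →
      ∀ m ∈ Set.Icc (-1 : ℝ) 1, ∀ h : ℝ, |h| ≤ h_c →
        |(N : ℝ) * ((4 / (N : ℝ) ^ 2) *
            (((N : ℝ) / 2 * (1 - m) *
                (Real.exp (β * (h + (m + 1 / N))) /
                  (Real.exp (-(β * (h + (m + 1 / N)))) + Real.exp (β * (h + (m + 1 / N)))))) +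
              ((N : ℝ) / 2 * (1 + m) *
                (Real.exp (-(β * (h + (m - 1 / N)))) /
                  (Real.exp (-(β * (h + (m - 1 / N)))) + Real.exp (β * (h + (m - 1 / N))))))))
          - 2 * (1 - m * Real.tanh (β * (m + h)))| ≤ c / (N : ℝ) := by
  refine ⟨4 * β, by positivity, 1, fun N hN m hm h hh => ?_⟩
  have hN0 : (0 : ℝ) < N := by exact_mod_cast hN
  have hNne : (N : ℝ) ≠ 0 := ne_of_gt hN0
  set Tp : ℝ := Real.tanh (β * (h + (m + 1 / N))) with hTp
  set Tm : ℝ := Real.tanh (β * (h + (m - 1 / N))) with hTm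
  set T : ℝ := Real.tanh (β * (m + h)) with hT
  have key : (N : ℝ) * ((4 / (N : ℝ) ^ 2) *
            (((N : ℝ) / 2 * (1 - m) *
                (Real.exp (β * (h + (m + 1 / N))) /
                  (Real.exp (-(β * (h + (m + 1 / N)))) + Real.exp (β * (h + (m + 1 / N)))))) +
              ((N : ℝ) / 2 * (1 + m) *
                (Real.exp (-(β * (h + (m - 1 / N)))) /
                  (Real.exp (-(β * (h + (m - 1 / N)))) + Real.exp (β * (h + (m - 1 / N))))))))
      = (1 - m) * (1 + Tp) + (1 + m) * (1 - Tm) := by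
    rw [sig_plus, sig_minus, hTp, hTm]
    field_simp
    ring
  rw [key]
  have hdiff : (1 - m) * (1 + Tp) + (1 + m) * (1 - Tm) - 2 * (1 - m * T)
      = (1 - m) * (Tp - T) - (1 + m) * (Tm - T) := by ring
  rw [hdiff]
  have hm1 : |1 - m| ≤ 2 := by
    rw [abs_le]; constructor <;> [linarith [hm.1, hm.2]; linarith [hm.1, hm.2]]
  have hm2 : |1 + m| ≤ 2 := by
    rw [abs_le]; constructor <;> [linarith [hm.1, hm.2]; linarith [hm.1, hm.2]]
  have hp : |Tp - T| ≤ β / N := by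
    have := tanh_lip (β * (h + (m + 1 / N))) (β * (m + h))
    rw [hTp, hT]
    refine this.trans (le_of_eq ?_)
    rw [show β * (h + (m + 1 / N)) - β * (m + h) = β / N by field_simp; ring]
    rw [abs_of_pos (by positivity)]
  have hq : |Tm - T| ≤ β / N := by
    have := tanh_lip (β * (h + (m - 1 / N))) (β * (m + h))
    rw [hTm, hT]
    refine this.trans (le_of_eq ?_)
    rw [show β * (h + (m - 1 / N)) - β * (m + h) = -(β / N) by field_simp; ring]
    rw [abs_neg, abs_of_pos (by positivity)]
  calc |(1 - m) * (Tp - T) - (1 + m) * (Tm - T)|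
      ≤ |(1 - m) * (Tp - T)| + |(1 + m) * (Tm - T)| := abs_sub _ _
    _ = |1 - m| * |Tp - T| + |1 + m| * |Tm - T| := by rw [abs_mul, abs_mul]
    _ ≤ 2 * (β / N) + 2 * (β / N) :=
        add_le_add (mul_le_mul hm1 hp (abs_nonneg _) (by norm_num))
          (mul_le_mul hm2 hq (abs_nonneg _) (by norm_num))
    _ = 4 * β / N := by field_simp; ring
end

section
/- Let y⁺ be the solution of y' = t² − y² with |y⁺(t) + t| → 0 as t → −∞. Then y⁺(t) ≥ −t for all t < 0, inf_{t∈ℝ} y⁺(t) > 0, and y⁺(t) ≥ t − 1/t for all sufficiently large t > 0. -/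
/-!
A function `g` with `g' < F(t, g)` wherever it meets a solution `y` of `y' = F(t, y)` can only
cross `y` from above, so `g ≤ y` propagates forward from any single time, and from `t = -∞`
when `g ≤ y` eventually there. For `y' = t² − y²` this applies in turn to the barriers `l − t`
(with `-1 < l < 0`, on `t ≤ 0`), `1/4 − t/2`, the constant `1/8` (which `y` can only meet where
`t ≥ 1/4`, by the previous barrier) and `t − 1/t` (for `t ≥ 2`). The last one needs a starting
time: were `y < t − 1/t` on `[2, ∞)`, then `y' > 3/2` there and `y` would overtake `t − 1/t`.
-/

open Filter Set Topology

section Comparison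

variable {F : ℝ → ℝ → ℝ} {y g g' : ℝ → ℝ}

theorem le_of_strictSubsolution {a b : ℝ}
    (hy : ∀ x ∈ Icc a b, HasDerivAt y (F x (y x)) x)
    (hg : ∀ x ∈ Icc a b, HasDerivAt g (g' x) x) (ha : g a ≤ y a)
    (hsub : ∀ x ∈ Ico a b, g x = y x → g' x < F x (g x)) :
    ∀ x ∈ Icc a b, g x ≤ y x :=
  image_le_of_deriv_right_lt_deriv_boundary'
    (fun x hx => (hg x hx).continuousAt.continuousWithinAt)
    (fun x hx => (hg x (Ico_subset_Icc_self hx)).hasDerivWithinAt) ha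
    (fun x hx => (hy x hx).continuousAt.continuousWithinAt)
    (fun x hx => (hy x (Ico_subset_Icc_self hx)).hasDerivWithinAt)
    (fun x hx hgy => by simpa only [hgy] using hsub x hx hgy)

theorem le_of_strictSubsolution_of_eventually_le {b : ℝ}
    (hy : ∀ x ≤ b, HasDerivAt y (F x (y x)) x)
    (hg : ∀ x ≤ b, HasDerivAt g (g' x) x)
    (hsub : ∀ x ≤ b, g x = y x → g' x < F x (g x))
    (hbot : ∀ᶠ x in atBot, g x ≤ y x) : ∀ x ≤ b, g x ≤ y x := by
  intro x hx
  obtain ⟨a, hga, hax⟩ := (hbot.and (eventually_le_atBot x)).exists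
  have hIic : Icc a x ⊆ Iic b := fun z hz => hz.2.trans hx
  exact le_of_strictSubsolution (fun z hz => hy z (hIic hz)) (fun z hz => hg z (hIic hz)) hga
    (fun z hz => hsub z (hIic (Ico_subset_Icc_self hz))) x ⟨hax, le_rfl⟩

end Comparison

section Riccati

variable {y : ℝ → ℝ} (hode : ∀ t, HasDerivAt y (t ^ 2 - y t ^ 2) t)
  (hasym : Tendsto (fun t => y t + t) atBot (𝓝 0))
include hode hasym

theorem neg_le_of_nonpos {t : ℝ} (ht : t ≤ 0) : -t ≤ y t := by
  have barrier : ∀ l ∈ Ioo (-1 : ℝ) 0, l - t ≤ y t := fun l hl =>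
    le_of_strictSubsolution_of_eventually_le (F := fun t y => t ^ 2 - y ^ 2)
      (g := fun x => l - x) (g' := fun _ => -1) (fun x _ => hode x)
      (fun x _ => (hasDerivAt_id' x).const_sub l)
      (fun x hx _ => by
        nlinarith [mul_nonneg_of_nonpos_of_nonpos hx hl.2.le, mul_pos (neg_pos.2 hl.2)
          (neg_lt_iff_pos_add.1 hl.1)])
      ((hasym.eventually (eventually_gt_nhds hl.2)).mono fun x hx => by linarith) t ht
  refine le_of_forall_lt_imp_le_of_dense fun c hc => ?_
  have hl : max (c + t) (-1 / 2) ∈ Ioo (-1 : ℝ) 0 :=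
    ⟨by linarith [le_max_right (c + t) (-1 / 2)], max_lt (by linarith) (by norm_num)⟩
  linarith [barrier _ hl, le_max_left (c + t) (-1 / 2)]

theorem one_div_four_sub_div_two_le (t : ℝ) : 1 / 4 - t / 2 ≤ y t :=
  le_of_strictSubsolution_of_eventually_le (F := fun t y => t ^ 2 - y ^ 2)
    (g := fun x => 1 / 4 - x / 2) (g' := fun _ => -1 / 2) (fun x _ => hode x)
    (fun x _ => (((hasDerivAt_id' x).div_const 2).const_sub (1 / 4)).congr_deriv (by ring))
    (fun x _ _ => by nlinarith [sq_nonneg (x + 1 / 6)])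
    (by
      filter_upwards [eventually_le_atBot (-1 / 2)] with x hx
      linarith [neg_le_of_nonpos hode hasym (hx.trans (by norm_num))])
    t le_rfl

theorem one_div_eight_le (t : ℝ) : 1 / 8 ≤ y t :=
  le_of_strictSubsolution_of_eventually_le (F := fun t y => t ^ 2 - y ^ 2)
    (g := fun _ => 1 / 8) (g' := fun _ => 0) (fun x _ => hode x)
    (fun x _ => hasDerivAt_const x _)
    (fun x _ hx => by nlinarith [one_div_four_sub_div_two_le hode hasym x])
    (by
      filter_upwards [eventually_le_atBot 0] with x hx
      linarith [one_div_four_sub_div_two_le hode hasym x])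
    t le_rfl

theorem exists_sub_inv_le : ∃ T ≥ 2, T - T⁻¹ ≤ y T := by
  by_contra! below
  have overtake := le_of_strictSubsolution (F := fun t y => t ^ 2 - y ^ 2)
    (g := fun x => 3 / 2 * x - 3) (g' := fun _ => 3 / 2) (a := 2) (b := 7) (fun x _ => hode x)
    (fun x _ => (((hasDerivAt_id' x).const_mul (3 / 2 : ℝ)).sub_const 3).congr_deriv (by ring))
    (by linarith [one_div_eight_le hode hasym 2])
    (fun x hx hgy => by
      have hx0 : 0 < x := by linarith [hx.1]
      have hinv : x * x⁻¹ = 1 := mul_inv_cancel₀ hx0.ne'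
      have hinv2 : x⁻¹ ≤ 1 / 2 := by rw [inv_le_comm₀ hx0 (by norm_num)]; linarith [hx.1]
      have hlt : 3 / 2 * x - 3 < x - x⁻¹ := hgy ▸ below x hx.1
      nlinarith [inv_pos.2 hx0, mul_pos (sub_pos.2 hlt) (by linarith [hx.1] :
        0 < x - x⁻¹ + (3 / 2 * x - 3))])
    7 ⟨by norm_num, le_rfl⟩
  have := below 7 (by norm_num)
  norm_num at overtake this
  linarith

theorem exists_forall_ge_sub_one_div_le : ∃ T : ℝ, ∀ t ≥ T, t - 1 / t ≤ y t := by
  obtain ⟨T, hT2, hT⟩ := exists_sub_inv_le hode hasym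
  refine ⟨T, fun t ht => ?_⟩
  have hne : ∀ x ∈ Icc T t, x ≠ 0 := fun x hx => by linarith [hx.1]
  simpa only [one_div] using le_of_strictSubsolution (F := fun t y => t ^ 2 - y ^ 2)
    (g := fun x => x - x⁻¹) (g' := fun x => 1 + (x ^ 2)⁻¹) (fun x _ => hode x)
    (fun x hx => ((hasDerivAt_id' x).sub (hasDerivAt_inv (hne x hx))).congr_deriv (by ring))
    hT
    (fun x hx _ => by
      have hx2 : 2 ≤ x := hT2.trans hx.1
      field_simp
      nlinarith)
    t ⟨ht, le_rfl⟩

end Riccati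

/-- Properties of the solution `y⁺` of `y' = t² − y²` asymptotic to `−t` as `t → −∞`:
`y⁺(t) ≥ −t` for `t < 0`, `inf y⁺ > 0`, and `y⁺(t) ≥ t − 1/t` for large `t`. -/
theorem stmt_15 (yplus : ℝ → ℝ)
    (hode : ∀ t : ℝ, HasDerivAt yplus (t ^ 2 - (yplus t) ^ 2) t)
    (hasym : Tendsto (fun t => yplus t + t) atBot (nhds 0)) :
    (∀ t < (0 : ℝ), -t ≤ yplus t) ∧
    (∃ c > 0, ∀ t : ℝ, c ≤ yplus t) ∧
    (∃ T : ℝ, ∀ t ≥ T, t - 1 / t ≤ yplus t) :=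
  ⟨fun _ ht => neg_le_of_nonpos hode hasym ht.le,
    ⟨1 / 8, by norm_num, one_div_eight_le hode hasym⟩,
    exists_forall_ge_sub_one_div_le hode hasym⟩
end
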